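/- For n ≥ 2, within any fixed row band a < n of the grid f(i,j) = (n·(i mod n) + i/n + j) mod n^2, the n rows i = a·n + r (r < n) have shift values s(r) = n·r + a, which are pairwise distinct modulo n^2 and pairwise non-congruent modulo n except when equal. In particular, the n rows of a band restricted to any column band b < n give n pairwise disjoint sets of n consecutive symbols (modulo n^2), whose union is all of Fin (n^2). -/

import Mathlib

/-!
Row `a·n + r`, restricted to column band `b`, is the image of the base-`n` digit block
`[n·r, n·r + n)` under the translation `x ↦ (x + a + n·b) mod n²`. The blocks for `r < n` tile
`[0, n²)`, and a translation modulo `n²` permutes `[0, n²)`, so the images tile `[0, n²)` as well.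
-/

def bandSet (n a b r : ℕ) : Set ℕ :=
  {x | ∃ c < n, x = (n * r + a + n * b + c) % n ^ 2}

namespace Nat

theorem injOn_add_mod_Iio (m s : ℕ) : Set.InjOn (fun x => (x + s) % m) (Set.Iio m) :=
  fun _ hx _ hy h => (ModEq.add_right_cancel' s h).eq_of_lt_of_lt hx hy

theorem image_add_mod_Iio (m s : ℕ) : (fun x => (x + s) % m) '' Set.Iio m = Set.Iio m := by
  have hmaps : Set.MapsTo (fun x => (x + s) % m) (Set.Iio m) (Set.Iio m) :=
    fun x hx => mod_lt _ (zero_lt_of_lt hx)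
  exact (((Set.finite_Iio m).injOn_iff_bijOn_of_mapsTo hmaps).mp
    (injOn_add_mod_Iio m s)).image_eq

theorem div_eq_of_mem_Ico_mul {n r x : ℕ} (hx : x ∈ Set.Ico (n * r) (n * r + n)) : x / n = r :=
  Nat.div_eq_of_lt_le (by linarith [hx.1]) (by linarith [hx.2])

theorem Ico_mul_subset_Iio_mul {n r : ℕ} (hr : r < n) :
    Set.Ico (n * r) (n * r + n) ⊆ Set.Iio (n * n) := fun _ hx =>
  calc _ < n * r + n := hx.2
    _ = n * (r + 1) := by ring
    _ ≤ n * n := Nat.mul_le_mul_left n hr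

theorem disjoint_Ico_mul {n r r' : ℕ} (hne : r ≠ r') :
    Disjoint (Set.Ico (n * r) (n * r + n)) (Set.Ico (n * r') (n * r' + n)) :=
  Set.disjoint_left.mpr fun _ hx hx' =>
    hne ((div_eq_of_mem_Ico_mul hx).symm.trans (div_eq_of_mem_Ico_mul hx'))

theorem biUnion_range_Ico_mul (n : ℕ) :
    ⋃ r ∈ Finset.range n, Set.Ico (n * r) (n * r + n) = Set.Iio (n * n) := by
  refine subset_antisymm (Set.iUnion₂_subset fun r hr => Ico_mul_subset_Iio_mul
    (Finset.mem_range.mp hr)) fun x (hx : x < n * n) => ?_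
  have hn : 0 < n := pos_of_ne_zero fun h => by simp [h] at hx
  refine Set.mem_biUnion (Finset.mem_range.mpr ((div_lt_iff_lt_mul hn).mpr hx)) ⟨?_, ?_⟩
  · exact mul_div_le x n
  · linarith [div_add_mod x n, mod_lt x hn]

end Nat

theorem bandSet_eq_image (n a b r : ℕ) :
    bandSet n a b r = (fun x => (x + (a + n * b)) % n ^ 2) '' Set.Ico (n * r) (n * r + n) := by
  ext x
  constructor
  · rintro ⟨c, hc, rfl⟩
    exact ⟨n * r + c, ⟨by omega, by omega⟩, by ring_nf⟩
  · rintro ⟨y, ⟨hy, hy'⟩, rfl⟩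
    exact ⟨y - n * r, by omega, by dsimp only; congr 1; omega⟩

theorem band_partition_general (n a b : ℕ) :
    (∀ r r', r < n → r' < n →
      (n * r + a) % n ^ 2 = (n * r' + a) % n ^ 2 → r = r') ∧
    (∀ r r', r < n → r' < n → r ≠ r' →
      Disjoint (bandSet n a b r) (bandSet n a b r')) ∧
    (⋃ r ∈ Finset.range n, bandSet n a b r) = Set.Iio (n ^ 2) := by
  have hblock : ∀ {r}, r < n → Set.Ico (n * r) (n * r + n) ⊆ Set.Iio (n ^ 2) :=
    fun hr => sq n ▸ Nat.Ico_mul_subset_Iio_mul hr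
  refine ⟨fun r r' hr hr' h => ?_, fun r r' hr hr' hne => ?_, ?_⟩
  · have hpos : 0 < n := Nat.zero_lt_of_lt hr
    have hmem : ∀ {r}, r < n → n * r ∈ Set.Iio (n ^ 2) :=
      fun hr => hblock hr ⟨le_rfl, by omega⟩
    exact Nat.eq_of_mul_eq_mul_left hpos (Nat.injOn_add_mod_Iio _ a (hmem hr) (hmem hr') h)
  · rw [bandSet_eq_image, bandSet_eq_image]
    exact (Nat.disjoint_Ico_mul hne).image (Nat.injOn_add_mod_Iio _ _) (hblock hr) (hblock hr')
  · simp_rw [bandSet_eq_image, ← Set.image_iUnion₂, Nat.biUnion_range_Ico_mul, ← sq,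
      Nat.image_add_mod_Iio]

theorem band_partition (n a b : ℕ) (hn : 2 ≤ n) (ha : a < n) (hb : b < n) :
    (∀ r r', r < n → r' < n →
      (n * r + a) % n ^ 2 = (n * r' + a) % n ^ 2 → r = r') ∧
    (∀ r r', r < n → r' < n → r ≠ r' →
      Disjoint (bandSet n a b r) (bandSet n a b r')) ∧
    (⋃ r ∈ Finset.range n, bandSet n a b r) = Set.Iio (n ^ 2) :=
  band_partition_general n a b
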